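/- Under the discrete braking dynamics d[t+τ] = d[t] − τ·v[t], v[t+τ] = v[t] − τ·b with constant braking power b > 0, a car starting at distance d₀ with speed v₀ > 0 stops (velocity reaches ≤ 0) after at most ⌈v₀/(τ·b)⌉ steps, and if d₀ > L + v₀²/(2b) + τ·v₀ then the distance d never drops below L before the car stops. -/
import Mathlib


/-- Discrete braking dynamics: with constant braking power `b > 0`, the car
stops after at most `⌈v₀/(τ·b)⌉` steps, and if the initial distance satisfies
`d₀ > L + v₀²/(2b) + τ·v₀` then the distance never drops below `L` before the
car stops. -/
theorem braking_stops_and_stays_safe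
    (τ b L d₀ v₀ : ℝ) (hτ : 0 < τ) (hb : 0 < b) (hL : 0 ≤ L) (hv₀ : 0 < v₀)
    (v d : ℕ → ℝ)
    (hv0 : v 0 = v₀) (hvstep : ∀ k, v (k + 1) = v k - τ * b)
    (hd0 : d 0 = d₀) (hdstep : ∀ k, d (k + 1) = d k - τ * v k) :
    v ⌈v₀ / (τ * b)⌉₊ ≤ 0 ∧
    (d₀ > L + v₀ ^ 2 / (2 * b) + τ * v₀ →
      ∀ k ≤ ⌈v₀ / (τ * b)⌉₊, d k > L) := by
  have hτb : 0 < τ * b := mul_pos hτ hb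
  have hv : ∀ k : ℕ, v k = v₀ - k * (τ * b) := by
    intro k
    induction k with
    | zero => simpa using hv0
    | succ n ih => rw [hvstep n, ih]; push_cast; ring
  have hd : ∀ k : ℕ, d k = d₀ - τ * k * v₀ + τ ^ 2 * b * ((k : ℝ) * (k - 1)) / 2 := by
    intro k
    induction k with
    | zero => simpa using hd0
    | succ n ih => rw [hdstep n, ih, hv n]; push_cast; ring
  have hceil : (⌈v₀ / (τ * b)⌉₊ : ℝ) < v₀ / (τ * b) + 1 :=
    Nat.ceil_lt_add_one (le_of_lt (div_pos hv₀ hτb))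
  constructor
  · rw [hv]
    have h1 : v₀ / (τ * b) ≤ (⌈v₀ / (τ * b)⌉₊ : ℝ) := Nat.le_ceil _
    have h2 : v₀ / (τ * b) * (τ * b) ≤ (⌈v₀ / (τ * b)⌉₊ : ℝ) * (τ * b) :=
      mul_le_mul_of_nonneg_right h1 (le_of_lt hτb)
    rw [div_mul_cancel₀ _ (ne_of_gt hτb)] at h2
    linarith
  · intro hinit k hk
    have hkr : (k : ℝ) < v₀ / (τ * b) + 1 := by
      calc (k : ℝ) ≤ (⌈v₀ / (τ * b)⌉₊ : ℝ) := by exact_mod_cast hk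
        _ < v₀ / (τ * b) + 1 := hceil
    rw [hd]
    have hpos : 0 < v₀ ^ 2 / (2 * b) := by positivity
    cases k with
    | zero => simp; nlinarith
    | succ m =>
      have hm : (m : ℝ) * (τ * b) ≤ v₀ := by
        have : (m : ℝ) < v₀ / (τ * b) := by push_cast at hkr; linarith
        have := mul_le_mul_of_nonneg_right (le_of_lt this) (le_of_lt hτb)
        rwa [div_mul_cancel₀ _ (ne_of_gt hτb)] at this
      have hm0 : (0 : ℝ) ≤ (m : ℝ) := Nat.cast_nonneg m
      have hkey : τ * (m : ℝ) * v₀ - τ ^ 2 * b * ((m : ℝ) * ((m : ℝ) + 1)) / 2 ≤ v₀ ^ 2 / (2 * b) := by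
        rw [le_div_iff₀ (by linarith : (0:ℝ) < 2 * b)]
        nlinarith [sq_nonneg (τ * b * (m : ℝ) - v₀), mul_nonneg (mul_nonneg (sq_nonneg τ) (sq_nonneg b)) hm0]
      push_cast
      nlinarith
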